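/- Let S = (P, L) be a slim dense near hexagon, let Q₁ and Q₂ be two disjoint big (classical) quads of S, and let Y be the subspace of S generated by Q₁ ∪ Q₂. For {i,j} = {1,2} and y ∈ Q_i, let z_y denote the unique point of Q_j at distance 1 from y, and for x ∈ P \ Y let x^j denote the unique point of Q_j at distance 1 from x. Then for every x ∈ P \ Y: d(z_{x^1}, x^2) = 1, d(z_{x^2}, x^1) = 1, and d(z_{x^1}, z_{x^2}) = d(x^1, x^2) = 2; that is, {x^1, z_{x^1}, x^2, z_{x^2}} is a quadrangle in the collinearity graph. -/

import Mathlib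

open scoped Classical

/-- A slim partial linear space: a nonempty point set, a nonempty collection of
lines each of which is a 3-element set of points, such that any two distinct
points lie in at most one common line. -/
structure SlimPLS (P : Type*) where
  lines : Set (Finset P)
  nonempty_pts : Nonempty P
  nonempty_lines : lines.Nonempty
  three_points : ∀ l ∈ lines, l.card = 3
  unique_line : ∀ l₁ ∈ lines, ∀ l₂ ∈ lines, ∀ x y : P,
    x ≠ y → x ∈ l₁ → y ∈ l₁ → x ∈ l₂ → y ∈ l₂ → l₁ = l₂

namespace SlimPLS

variable {P : Type*}

/-- Two points are collinear if they are distinct and lie on a common line. -/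
def Collinear (S : SlimPLS P) (x y : P) : Prop :=
  x ≠ y ∧ ∃ l ∈ S.lines, x ∈ l ∧ y ∈ l

/-- The collinearity graph of a slim partial linear space. -/
def graph (S : SlimPLS P) : SimpleGraph P where
  Adj x y := S.Collinear x y
  symm := ⟨fun x y (h : S.Collinear x y) => ⟨Ne.symm h.1, h.2.elim fun l hl => ⟨l, hl.1, hl.2.2, hl.2.1⟩⟩⟩
  loopless := ⟨fun x (h : S.Collinear x x) => h.1 rfl⟩

/-- `S` is a generalized quadrangle of order `(2, t)`: it is connected, no point
is collinear with all other points, every point is on exactly `t+1` lines, and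
for every point `x` and line `l` with `x ∉ l` there is exactly one point of `l`
collinear with `x`. -/
def IsGQ (S : SlimPLS P) (t : ℕ) : Prop :=
  S.graph.Connected ∧
  (∀ x : P, ∃ y : P, y ≠ x ∧ ¬ S.Collinear x y) ∧
  (∀ x : P, {l | l ∈ S.lines ∧ x ∈ l}.ncard = t + 1) ∧
  (∀ x : P, ∀ l ∈ S.lines, x ∉ l → ∃! y : P, y ∈ l ∧ S.Collinear x y)

/-- A set of points is an arc if its points are pairwise non-collinear. -/
def IsArc (S : SlimPLS P) (T : Set P) : Prop :=
  ∀ x ∈ T, ∀ y ∈ T, x ≠ y → ¬ S.Collinear x y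

/-- `{a,b,c}` is a complete 3-arc: three pairwise distinct, pairwise
non-collinear points not contained in a 4-arc. -/
def Complete3Arc (S : SlimPLS P) (a b c : P) : Prop :=
  a ≠ b ∧ a ≠ c ∧ b ≠ c ∧ S.IsArc {a, b, c} ∧
  ∀ d : P, d ∉ ({a, b, c} : Set P) → ¬ S.IsArc (insert d {a, b, c})

/-- `{a,b,c}` is a complete 3-arc of the subset `Q`: three pairwise distinct,
pairwise non-collinear points of `Q` not contained in a 4-arc inside `Q`. -/
def Complete3ArcIn (S : SlimPLS P) (Q : Set P) (a b c : P) : Prop :=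
  a ∈ Q ∧ b ∈ Q ∧ c ∈ Q ∧ a ≠ b ∧ a ≠ c ∧ b ≠ c ∧ S.IsArc {a, b, c} ∧
  ∀ d ∈ Q, d ∉ ({a, b, c} : Set P) → ¬ S.IsArc (insert d {a, b, c})

/-- `Q` is a sub-generalized-quadrangle of order `(2,t)` of `S`: together with
the lines of `S` contained in it, `Q` is a `(2,t)`-GQ; in particular any line
meeting `Q` in at least two points is contained in `Q`. -/
def IsSubGQ (S : SlimPLS P) (Q : Set P) (t : ℕ) : Prop :=
  Q.Nonempty ∧
  (∃ l ∈ S.lines, (l : Set P) ⊆ Q) ∧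
  (∀ l ∈ S.lines, ∀ x ∈ l, ∀ y ∈ l, x ≠ y → x ∈ Q → y ∈ Q → (l : Set P) ⊆ Q) ∧
  (SimpleGraph.induce Q S.graph).Connected ∧
  (∀ x ∈ Q, ∃ y ∈ Q, y ≠ x ∧ ¬ S.Collinear x y) ∧
  (∀ x ∈ Q, {l | l ∈ S.lines ∧ x ∈ l ∧ (l : Set P) ⊆ Q}.ncard = t + 1) ∧
  (∀ x ∈ Q, ∀ l ∈ S.lines, (l : Set P) ⊆ Q → x ∉ l → ∃! y : P, y ∈ l ∧ S.Collinear x y)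

/-- `S` is a near hexagon: connected of diameter 3, no point collinear with all
other points, and for every point `x` and line `l` there is a unique point of
`l` nearest to `x`. -/
def IsNearHexagon (S : SlimPLS P) : Prop :=
  S.graph.Connected ∧
  (∀ x y : P, S.graph.dist x y ≤ 3) ∧
  (∃ x y : P, S.graph.dist x y = 3) ∧
  (∀ x : P, ∃ y : P, y ≠ x ∧ ¬ S.Collinear x y) ∧
  (∀ x : P, ∀ l ∈ S.lines, ∃! y : P, y ∈ l ∧ ∀ z ∈ l, S.graph.dist x y ≤ S.graph.dist x z)

/-- `S` is dense: any two points at distance 2 have at least two common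
neighbours. -/
def IsDense (S : SlimPLS P) : Prop :=
  ∀ x y : P, S.graph.dist x y = 2 →
    ∃ u v : P, u ≠ v ∧ S.Collinear x u ∧ S.Collinear u y ∧ S.Collinear x v ∧ S.Collinear v y

/-- `Q` is a quad: a convex subset of diameter 2 in which no point is collinear
with all other points of `Q`. -/
def IsQuad (S : SlimPLS P) (Q : Set P) : Prop :=
  (∀ u ∈ Q, ∀ v ∈ Q, ∀ w : P,
      S.graph.dist u w + S.graph.dist w v = S.graph.dist u v → w ∈ Q) ∧
  (∀ u ∈ Q, ∀ v ∈ Q, S.graph.dist u v ≤ 2) ∧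
  (∃ u ∈ Q, ∃ v ∈ Q, S.graph.dist u v = 2) ∧
  (∀ u ∈ Q, ∃ v ∈ Q, v ≠ u ∧ ¬ S.Collinear u v)

/-- A quad `Q` is of type `(2, t₂)` if every point of `Q` lies on exactly
`t₂ + 1` lines contained in `Q`. -/
def QuadType (S : SlimPLS P) (Q : Set P) (t₂ : ℕ) : Prop :=
  ∀ x ∈ Q, {l | l ∈ S.lines ∧ x ∈ l ∧ (l : Set P) ⊆ Q}.ncard = t₂ + 1

/-- The point-quad pair `(x, Q)` is classical: there is a unique point `y ∈ Q`
nearest to `x`, with `d(x,z) = d(x,y) + d(y,z)` for all `z ∈ Q`. -/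
def IsClassicalPair (S : SlimPLS P) (x : P) (Q : Set P) : Prop :=
  ∃! y : P, y ∈ Q ∧ ∀ z ∈ Q, S.graph.dist x z = S.graph.dist x y + S.graph.dist y z

/-- A quad is classical (big) if every point-quad pair with it is classical. -/
def IsClassicalQuad (S : SlimPLS P) (Q : Set P) : Prop :=
  ∀ x : P, S.IsClassicalPair x Q

/-- A subspace: any line containing two of its points is contained in it. -/
def IsSubspace (S : SlimPLS P) (X : Set P) : Prop :=
  ∀ l ∈ S.lines, ∀ x ∈ l, ∀ y ∈ l, x ≠ y → x ∈ X → y ∈ X → (l : Set P) ⊆ X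

/-- The subspace generated by a set of points. -/
def subspaceGen (S : SlimPLS P) (A : Set P) : Set P :=
  ⋂₀ {X | S.IsSubspace X ∧ A ⊆ X}

/-- `NPdim S` is the rank over `F₂` of the distance-3 adjacency matrix. -/
noncomputable def NPdim [Fintype P] (S : SlimPLS P) : ℕ :=
  Matrix.rank (Matrix.of fun x y : P => if S.graph.dist x y = 3 then (1 : ZMod 2) else 0)

/-- `dimV S` is the dimension of the universal representation module of `S`:
the free `F₂`-vector space on the points modulo the span of the elements
`v_x + v_y + v_z` for the lines `{x,y,z}`. -/
noncomputable def dimV (S : SlimPLS P) : ℕ :=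
  Module.finrank (ZMod 2)
    ((P →₀ ZMod 2) ⧸ Submodule.span (ZMod 2)
      {f : P →₀ ZMod 2 | ∃ l ∈ S.lines, f = ∑ x ∈ l, Finsupp.single x 1})

end SlimPLS

/-- A representation of a slim partial linear space `S`: an assignment of an
order-2 element `r x` of `R` to each point `x`, such that the images generate
`R` and for every line `{x,y,z}` the set `{1, r x, r y, r z}` is a Klein four
subgroup (`r x * r y = r z` for the three pairwise distinct points of a line). -/
structure SlimPLS.Rep {P : Type*} (S : SlimPLS P) (R : Type*) [Group R] where
  r : P → R
  order_two : ∀ x : P, orderOf (r x) = 2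
  gen : Subgroup.closure (Set.range r) = ⊤
  line_rel : ∀ l ∈ S.lines, ∀ x ∈ l, ∀ y ∈ l, ∀ z ∈ l,
    x ≠ y → x ≠ z → y ≠ z → r x * r y = r z

/-- A finite 2-group is extraspecial if its Frattini subgroup, commutator
subgroup and center coincide and have order 2. -/
def IsExtraspecial (G : Type*) [Group G] : Prop :=
  Finite G ∧ IsPGroup 2 G ∧ frattini G = commutator G ∧
    commutator G = Subgroup.center G ∧ Nat.card (Subgroup.center G) = 2

/-!
The gate property of a big quad does all the work. Since `x ∉ Y`, the neighbours `x¹ ∈ Q₁` and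
`x² ∈ Q₂` of `x` cannot be collinear: the line through them would either contain `x`, putting `x`
into the subspace `Y`, or carry two points nearest to `x`. Hence `d(x¹, x²) = 2`. The gate of `x¹`
in `Q₂` is its neighbour `z_{x¹}`, so `2 = d(x¹, x²) = 1 + d(z_{x¹}, x²)`; symmetrically for
`z_{x²}`. Finally `x²` is the gate of `z_{x²}` in `Q₂`, giving `d(z_{x²}, z_{x¹}) = 1 + 1`.
-/

namespace SlimPLS

variable {P : Type*} {S : SlimPLS P}

theorem subset_subspaceGen (A : Set P) : A ⊆ S.subspaceGen A :=
  fun _ ha _ hX => hX.2 ha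

theorem isSubspace_subspaceGen (A : Set P) : S.IsSubspace (S.subspaceGen A) := by
  intro l hl x hxl y hyl hxy hx hy z hzl X hX
  exact hX.1 l hl x hxl y hyl hxy (hx X hX) (hy X hX) hzl

theorem IsClassicalPair.dist_eq_one_add_dist (hconn : S.graph.Connected) {a b : P} {Q : Set P}
    (hc : S.IsClassicalPair a Q) (ha : a ∉ Q) (hb : b ∈ Q) (hab : S.graph.dist a b = 1) :
    ∀ z ∈ Q, S.graph.dist a z = 1 + S.graph.dist b z := by
  obtain ⟨y, ⟨hyQ, hy⟩, -⟩ := hc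
  have hay : S.graph.dist a y ≠ 0 := fun h => ha (hconn.dist_eq_zero_iff.mp h ▸ hyQ)
  have hyb : y = b := hconn.dist_eq_zero_iff.mp (by have := hy b hb; omega)
  subst hyb
  intro z hz
  have := hy z hz
  omega

theorem IsNearHexagon.eq_of_mem_line_of_dist_eq_one (hNH : S.IsNearHexagon) {x y y' : P}
    {l : Finset P} (hl : l ∈ S.lines) (hxl : x ∉ l) (hy : y ∈ l) (hy' : y' ∈ l)
    (hxy : S.graph.dist x y = 1) (hxy' : S.graph.dist x y' = 1) : y = y' := by
  have nearest : ∀ w ∈ l, S.graph.dist x w = 1 → ∀ z ∈ l, S.graph.dist x w ≤ S.graph.dist x z :=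
    fun w _ hw z hz => hw ▸ hNH.1.pos_dist_of_ne fun h => hxl (h ▸ hz)
  exact (hNH.2.2.2.2 x l hl).unique ⟨hy, nearest y hy hxy⟩ ⟨hy', nearest y' hy' hxy'⟩

theorem IsNearHexagon.dist_eq_two_of_notMem_subspaceGen (hNH : S.IsNearHexagon) {A : Set P}
    {x x₁ x₂ : P} (hx : x ∉ S.subspaceGen A) (hx₁ : x₁ ∈ A) (hx₂ : x₂ ∈ A) (hne : x₁ ≠ x₂)
    (hxx₁ : S.graph.dist x x₁ = 1) (hxx₂ : S.graph.dist x x₂ = 1) :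
    S.graph.dist x₁ x₂ = 2 := by
  have hle : S.graph.dist x₁ x₂ ≤ 2 :=
    calc S.graph.dist x₁ x₂ ≤ S.graph.dist x₁ x + S.graph.dist x x₂ := hNH.1.dist_triangle
      _ = 2 := by rw [SimpleGraph.dist_comm, hxx₁, hxx₂]
  have hpos : 0 < S.graph.dist x₁ x₂ := hNH.1.pos_dist_of_ne hne
  have hne_one : S.graph.dist x₁ x₂ ≠ 1 := by
    intro h
    obtain ⟨-, l, hl, hx₁l, hx₂l⟩ := SimpleGraph.dist_eq_one_iff_adj.mp h
    have hxl : x ∉ l := fun hxl => hx <| isSubspace_subspaceGen A l hl x₁ hx₁l x₂ hx₂l hne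
      (subset_subspaceGen A hx₁) (subset_subspaceGen A hx₂) hxl
    exact hne (hNH.eq_of_mem_line_of_dist_eq_one hl hxl hx₁l hx₂l hxx₁ hxx₂)
  omega

end SlimPLS

theorem big_quads_quadrangle_general {P : Type*} (S : SlimPLS P)
    (hNH : S.IsNearHexagon)
    (Q₁ Q₂ : Set P)
    (hb₁ : S.IsClassicalQuad Q₁) (hb₂ : S.IsClassicalQuad Q₂)
    (hdisj : Disjoint Q₁ Q₂)
    (x : P) (hx : x ∉ S.subspaceGen (Q₁ ∪ Q₂))
    (x1 x2 z1 z2 : P)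
    (hx1 : x1 ∈ Q₁) (hxx1 : S.graph.dist x x1 = 1)
    (hx2 : x2 ∈ Q₂) (hxx2 : S.graph.dist x x2 = 1)
    (hz1 : z1 ∈ Q₂) (hx1z1 : S.graph.dist x1 z1 = 1)
    (hz2 : z2 ∈ Q₁) (hx2z2 : S.graph.dist x2 z2 = 1) :
    S.graph.dist z1 x2 = 1 ∧ S.graph.dist z2 x1 = 1 ∧
      S.graph.dist z1 z2 = 2 ∧ S.graph.dist x1 x2 = 2 := by
  have hx1Q₂ : x1 ∉ Q₂ := hdisj.notMem_of_mem_left hx1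
  have hx2Q₁ : x2 ∉ Q₁ := hdisj.notMem_of_mem_right hx2
  have hz2Q₂ : z2 ∉ Q₂ := hdisj.notMem_of_mem_left hz2
  have hx12 : S.graph.dist x1 x2 = 2 :=
    hNH.dist_eq_two_of_notMem_subspaceGen hx (.inl hx1) (.inr hx2)
      (fun h => hx1Q₂ (h ▸ hx2)) hxx1 hxx2
  have gate₁ := (hb₂ x1).dist_eq_one_add_dist hNH.1 hx1Q₂ hz1 hx1z1
  have gate₂ := (hb₁ x2).dist_eq_one_add_dist hNH.1 hx2Q₁ hz2 hx2z2
  have gate₃ := (hb₂ z2).dist_eq_one_add_dist hNH.1 hz2Q₂ hx2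
    (by rw [SimpleGraph.dist_comm]; exact hx2z2)
  have hz1x2 : S.graph.dist z1 x2 = 1 := by have := gate₁ x2 hx2; omega
  have hz2x1 : S.graph.dist z2 x1 = 1 := by
    have := gate₂ x1 hx1; rw [SimpleGraph.dist_comm] at hx12; omega
  have hz1z2 : S.graph.dist z1 z2 = 2 := by
    rw [SimpleGraph.dist_comm, gate₃ z1 hz1, SimpleGraph.dist_comm, hz1x2]
  exact ⟨hz1x2, hz2x1, hz1z2, hx12⟩

/-- Let `Q₁, Q₂` be disjoint big quads of a slim dense near
hexagon and `Y` the subspace generated by `Q₁ ∪ Q₂`. For `x ∉ Y`, with `x^j`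
the unique point of `Q_j` at distance 1 from `x` and `z_{x^i}` the unique point
of `Q_j` at distance 1 from `x^i`, the four points
`x^1, z_{x^1}, x^2, z_{x^2}` form a quadrangle: `d(z_{x^1}, x^2) = 1`,
`d(z_{x^2}, x^1) = 1` and `d(z_{x^1}, z_{x^2}) = d(x^1, x^2) = 2`. -/
theorem big_quads_quadrangle {P : Type*} (S : SlimPLS P)
    (hNH : S.IsNearHexagon) (hD : S.IsDense)
    (Q₁ Q₂ : Set P) (hQ₁ : S.IsQuad Q₁) (hQ₂ : S.IsQuad Q₂)
    (hb₁ : S.IsClassicalQuad Q₁) (hb₂ : S.IsClassicalQuad Q₂)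
    (hdisj : Disjoint Q₁ Q₂)
    (x : P) (hx : x ∉ S.subspaceGen (Q₁ ∪ Q₂))
    (x1 x2 z1 z2 : P)
    (hx1 : x1 ∈ Q₁) (hxx1 : S.graph.dist x x1 = 1)
    (hx2 : x2 ∈ Q₂) (hxx2 : S.graph.dist x x2 = 1)
    (hz1 : z1 ∈ Q₂) (hx1z1 : S.graph.dist x1 z1 = 1)
    (hz2 : z2 ∈ Q₁) (hx2z2 : S.graph.dist x2 z2 = 1) :
    S.graph.dist z1 x2 = 1 ∧ S.graph.dist z2 x1 = 1 ∧
      S.graph.dist z1 z2 = 2 ∧ S.graph.dist x1 x2 = 2 :=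
  big_quads_quadrangle_general S hNH Q₁ Q₂ hb₁ hb₂ hdisj x hx x1 x2 z1 z2 hx1 hxx1 hx2 hxx2 hz1
    hx1z1 hz2 hx2z2
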